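/- Let p ≥ 0, κ > 0, and 0 < y < 1/κ. Then n·n_{ρy} − n_y·n_ρ > 0; in fact, n·n_{ρy} − n_y·n_ρ = (1−yκ)^p·(1+y)·[ (1+κ)^{p+1}·(1 + pyκ + (p+1)y²κ) − (1−yκ)^{p+2} ], and this quantity is strictly positive. -/

import Mathlib

/- The quantities `n`, `n_y`, `n_ρ`, `n_{ρy}`, `n_{ρρ}`, `n_{ρρy}`, with real powers
of positive bases. -/

noncomputable def nfun (p κ y : ℝ) : ℝ :=
  (1 + κ) ^ (p + 2) * y + (1 - y * κ) ^ (p + 2)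

noncomputable def nfun_y (p κ y : ℝ) : ℝ :=
  (1 + κ) ^ (p + 2) - (1 - y * κ) ^ (p + 1) * (1 + (p + 2) * κ + (p + 1) * y * κ)

noncomputable def nfun_ρ (p κ y : ℝ) : ℝ :=
  y * ((1 + κ) ^ (p + 1) - (1 - y * κ) ^ (p + 1))

noncomputable def nfun_ρy (p κ y : ℝ) : ℝ :=
  (1 + κ) ^ (p + 1) - (1 - y * κ) ^ p * (1 - (p + 2) * y * κ - (p + 1) * y ^ 2 * κ)

noncomputable def nfun_ρρ (p κ y : ℝ) : ℝ :=
  (1 + κ) ^ p * y + (1 - y * κ) ^ p * y ^ 2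

noncomputable def nfun_ρρy (p κ y : ℝ) : ℝ :=
  (1 + κ) ^ p +
    (1 - y * κ) ^ (p - 1) * (2 * y + y ^ 2 - (p + 2) * y ^ 2 * κ - (p + 1) * y ^ 3 * κ)

lemma Real.rpow_add_two {x : ℝ} (hx : x ≠ 0) (p : ℝ) : x ^ (p + 2) = x ^ p * x ^ 2 := by
  exact_mod_cast Real.rpow_add_natCast hx p 2

/-- Once the exponents `p + 1`, `p + 2` are split off, this is a polynomial identity in
`(1 + κ) ^ p`, `(1 - y κ) ^ p`, `p`, `κ`, `y`. -/
lemma nfun_mul_nfun_ρy_sub (p κ y : ℝ) (hu : 1 + κ ≠ 0) (hv : 1 - y * κ ≠ 0) :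
    nfun p κ y * nfun_ρy p κ y - nfun_y p κ y * nfun_ρ p κ y =
      (1 - y * κ) ^ p * (1 + y) *
        ((1 + κ) ^ (p + 1) * (1 + p * y * κ + (p + 1) * y ^ 2 * κ) - (1 - y * κ) ^ (p + 2)) := by
  simp only [nfun, nfun_ρy, nfun_y, nfun_ρ, Real.rpow_add_one hu, Real.rpow_add_one hv,
    Real.rpow_add_two hu, Real.rpow_add_two hv]
  ring

lemma one_sub_mul_rpow_lt_one_add_rpow_mul {p κ y : ℝ} (hp : 0 ≤ p) (hκ : 0 < κ) (hy : 0 < y)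
    (hyκ : y * κ < 1) :
    (1 - y * κ) ^ (p + 2) < (1 + κ) ^ (p + 1) * (1 + p * y * κ + (p + 1) * y ^ 2 * κ) := by
  have hu : 1 < (1 + κ) ^ (p + 1) := Real.one_lt_rpow (by linarith) (by linarith)
  have hv : (1 - y * κ) ^ (p + 2) < 1 :=
    Real.rpow_lt_one (by linarith) (by nlinarith) (by linarith)
  have hfactor : 1 ≤ 1 + p * y * κ + (p + 1) * y ^ 2 * κ := by
    have : 0 ≤ p * y * κ := by positivity
    have : 0 ≤ (p + 1) * y ^ 2 * κ := by positivity
    linarith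
  calc (1 - y * κ) ^ (p + 2) < 1 := hv
    _ < (1 + κ) ^ (p + 1) := hu
    _ ≤ (1 + κ) ^ (p + 1) * (1 + p * y * κ + (p + 1) * y ^ 2 * κ) :=
      le_mul_of_one_le_right (by linarith) hfactor

theorem stmt14 (p κ y : ℝ) (hp : 0 ≤ p) (hκ : 0 < κ) (hy0 : 0 < y) (hy1 : y < 1 / κ) :
    nfun p κ y * nfun_ρy p κ y - nfun_y p κ y * nfun_ρ p κ y =
      (1 - y * κ) ^ p * (1 + y) *
        ((1 + κ) ^ (p + 1) * (1 + p * y * κ + (p + 1) * y ^ 2 * κ) - (1 - y * κ) ^ (p + 2)) ∧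
    0 < nfun p κ y * nfun_ρy p κ y - nfun_y p κ y * nfun_ρ p κ y := by
  have hyκ : y * κ < 1 := (lt_div_iff₀ hκ).mp hy1
  have hv : 0 < 1 - y * κ := by linarith
  have heq := nfun_mul_nfun_ρy_sub p κ y (by linarith) hv.ne'
  refine ⟨heq, heq ▸ mul_pos (by positivity) ?_⟩
  exact sub_pos.mpr (one_sub_mul_rpow_lt_one_add_rpow_mul hp hκ hy0 hyκ)
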